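/- Let C = {(x:y:z) ∈ ℙ²(ℂ) : x²·z = x·y²}. A matrix M ∈ SL(3,ℂ) satisfies M·C = C (as a subset of ℙ²(ℂ)) if and only if there exist a, c ∈ ℂ with a ≠ 0, c ≠ 0, c³ = 1 and b ∈ ℂ such that M is the lower-triangular matrix with rows (a, 0, 0), (b, c, 0), (b²/a, 2bc/a, 1/(ac)). -/

import Mathlib

open Matrix

noncomputable section

/-- The special linear group `SL(3, ℂ)`. -/
abbrev SL3 := Matrix.SpecialLinearGroup (Fin 3) ℂ

/-- The complex projective plane `ℙ²(ℂ)`. -/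
abbrev P2 := Projectivization ℂ (Fin 3 → ℂ)

/-- The action of `SL(3, ℂ)` on `ℙ²(ℂ)` induced by the linear action on `ℂ³`. -/
noncomputable def act (g : SL3) (p : P2) : P2 :=
  Projectivization.map (Matrix.SpecialLinearGroup.toLin' g).toLinearMap
    (Matrix.SpecialLinearGroup.toLin' g).injective p
/-- The union of a smooth conic and a tangent line, `{x²·z = x·y²}`. -/
def Ctan : Set P2 := {p : P2 | p.rep 0 ^ 2 * p.rep 2 = p.rep 0 * p.rep 1 ^ 2}

open Polynomial

/-!
If `M • C ⊆ C`, the cubic form `x (xz - y²)` vanishes on `M (1, t, t²)` for every `t`. The first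
row of `M` is nonzero, so the quadratic factor vanishes identically in `t`, which forces `M` to
preserve the conic's quadratic form up to a scalar `μ`, nonzero since `M` is invertible. The points
`(0 : ±1 : 1)` of the tangent line must then land on the line `x = 0`, so the first row of `M` is
`(a, 0, 0)`; evaluating the quadratic-form identity on a few vectors and using `det M = 1` gives
the stated shape. Conversely, such a matrix multiplies the cubic form by `a c²`.
-/

section Forms

variable {R : Type*} [CommRing R]

def conicForm (v : Fin 3 → R) : R := v 0 * v 2 - v 1 ^ 2

def cubicForm (v : Fin 3 → R) : R := v 0 * conicForm v

lemma cubicForm_smul (t : R) (v : Fin 3 → R) : cubicForm (t • v) = t ^ 3 * cubicForm v := by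
  simp only [cubicForm, conicForm, Pi.smul_apply, smul_eq_mul]
  ring

lemma cubicForm_eq_zero_iff (v : Fin 3 → R) : cubicForm v = 0 ↔ v 0 ^ 2 * v 2 = v 0 * v 1 ^ 2 := by
  rw [← sub_eq_zero (a := v 0 ^ 2 * v 2), cubicForm, conicForm]
  ring_nf

lemma mulVec_fin_three (A : Matrix (Fin 3) (Fin 3) R) (v : Fin 3 → R) (i : Fin 3) :
    (A *ᵥ v) i = A i 0 * v 0 + A i 1 * v 1 + A i 2 * v 2 := by
  simp [mulVec, dotProduct, Fin.sum_univ_three]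

end Forms

lemma mk_mem_Ctan_iff (v : Fin 3 → ℂ) (hv : v ≠ 0) :
    Projectivization.mk ℂ v hv ∈ Ctan ↔ cubicForm v = 0 := by
  obtain ⟨t, ht⟩ := (Projectivization.mk_eq_mk_iff ℂ _ _ (Projectivization.rep_nonzero _) hv).mp
    (Projectivization.mk_rep (Projectivization.mk ℂ v hv))
  change _ = _ ↔ _
  rw [← cubicForm_eq_zero_iff, ← ht, Units.smul_def, cubicForm_smul, mul_eq_zero,
    or_iff_right (pow_ne_zero 3 t.ne_zero)]

lemma act_mk_mem_Ctan_iff (g : SL3) (v : Fin 3 → ℂ) (hv : v ≠ 0) :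
    act g (Projectivization.mk ℂ v hv) ∈ Ctan ↔
      cubicForm ((g : Matrix (Fin 3) (Fin 3) ℂ) *ᵥ v) = 0 :=
  mk_mem_Ctan_iff _ _

lemma act_act_inv (g : SL3) (p : P2) : act g (act g⁻¹ p) = p := by
  induction p using Projectivization.ind with
  | h v hv =>
    simp only [act, Projectivization.map_mk]
    congr 1
    simp

lemma image_act_Ctan_eq_of_cubicForm_mulVec (M : SL3) {c : ℂ} (hc : c ≠ 0)
    (h : ∀ v, cubicForm ((M : Matrix (Fin 3) (Fin 3) ℂ) *ᵥ v) = c * cubicForm v) :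
    act M '' Ctan = Ctan := by
  refine subset_antisymm ?_ fun p hp ↦ ⟨act M⁻¹ p, ?_, act_act_inv M p⟩
  · rintro - ⟨p, hp, rfl⟩
    induction p using Projectivization.ind with
    | h v hv => rw [act_mk_mem_Ctan_iff, h, (mk_mem_Ctan_iff v hv).mp hp, mul_zero]
  · induction p using Projectivization.ind with
    | h v hv =>
      have hinv : (M : Matrix (Fin 3) (Fin 3) ℂ) * (M⁻¹ : SL3) = 1 :=
        congrArg Subtype.val (mul_inv_cancel M)
      rw [act_mk_mem_Ctan_iff, ← mul_eq_zero_iff_left hc, ← h, mulVec_mulVec, hinv, one_mulVec]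
      exact (mk_mem_Ctan_iff v hv).mp hp

lemma cubicForm_mulVec_eq_zero_of_image_act_subset (M : SL3) (h : act M '' Ctan ⊆ Ctan)
    {v : Fin 3 → ℂ} (hv : cubicForm v = 0) :
    cubicForm ((M : Matrix (Fin 3) (Fin 3) ℂ) *ᵥ v) = 0 := by
  obtain rfl | hv0 := eq_or_ne v 0
  · simp [cubicForm, conicForm]
  · exact (act_mk_mem_Ctan_iff M v hv0).mp (h ⟨_, (mk_mem_Ctan_iff v hv0).mpr hv, rfl⟩)

lemma eq_zero_or_eq_zero_of_forall_sum_mul_sum {K : Type*} [CommRing K] [IsDomain K] [Infinite K]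
    {m n : ℕ} {a : Fin m → K} {b : Fin n → K}
    (h : ∀ t, (∑ i, a i * t ^ (i : ℕ)) * ∑ j, b j * t ^ (j : ℕ) = 0) : a = 0 ∨ b = 0 := by
  classical
  have heval : ∀ {k} (c : Fin k → K) t, (ofFn k c).eval t = ∑ i, c i * t ^ (i : ℕ) := by
    intro k c t
    simp [ofFn_eq_sum_monomial, eval_finsetSum]
  have hmul : ofFn m a * ofFn n b = 0 := Polynomial.funext fun t ↦ by simp [heval, h]
  simpa [← (injective_ofFn _).eq_iff] using hmul

section Field

variable {K : Type*} [Field K]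

def stabilizerMatrix (a c b : K) : Matrix (Fin 3) (Fin 3) K :=
  !![a, 0, 0; b, c, 0; b ^ 2 / a, 2 * b * c / a, 1 / (a * c)]

lemma exists_conicForm_mulVec_eq_mul [Infinite K] (A : Matrix (Fin 3) (Fin 3) K) (hA : A 0 ≠ 0)
    (h : ∀ t : K, cubicForm (A *ᵥ ![1, t, t ^ 2]) = 0) :
    ∃ μ, ∀ v, conicForm (A *ᵥ v) = μ * conicForm v := by
  obtain ⟨h0, h1, h2, h3, h4⟩ : A 0 0 * A 2 0 - A 1 0 ^ 2 = 0 ∧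
      A 0 0 * A 2 1 + A 0 1 * A 2 0 - 2 * A 1 0 * A 1 1 = 0 ∧
      A 0 0 * A 2 2 + A 0 1 * A 2 1 + A 0 2 * A 2 0 - A 1 1 ^ 2 - 2 * A 1 0 * A 1 2 = 0 ∧
      A 0 1 * A 2 2 + A 0 2 * A 2 1 - 2 * A 1 1 * A 1 2 = 0 ∧
      A 0 2 * A 2 2 - A 1 2 ^ 2 = 0 := by
    -- `(A *ᵥ ![1, t, t ^ 2]) 0` has coefficients `A 0`; the vector below lists the coefficients
    -- of `conicForm (A *ᵥ ![1, t, t ^ 2])` as a quartic in `t`.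
    have := (eq_zero_or_eq_zero_of_forall_sum_mul_sum (a := A 0) (b := ![
      A 0 0 * A 2 0 - A 1 0 ^ 2,
      A 0 0 * A 2 1 + A 0 1 * A 2 0 - 2 * A 1 0 * A 1 1,
      A 0 0 * A 2 2 + A 0 1 * A 2 1 + A 0 2 * A 2 0 - A 1 1 ^ 2 - 2 * A 1 0 * A 1 2,
      A 0 1 * A 2 2 + A 0 2 * A 2 1 - 2 * A 1 1 * A 1 2,
      A 0 2 * A 2 2 - A 1 2 ^ 2]) fun t ↦ by
        rw [← h t]
        simp only [cubicForm, conicForm, mulVec_fin_three, Fin.sum_univ_three, Fin.sum_univ_five,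
          cons_val_zero, cons_val_one, cons_val_two, cons_val_three, cons_val_four, head_cons,
          tail_cons, Fin.coe_ofNat_eq_mod, Nat.reduceMod, pow_zero, pow_one]
        ring).resolve_left hA
    simpa [funext_iff, Fin.forall_fin_succ] using this
  refine ⟨A 0 0 * A 2 2 + A 0 2 * A 2 0 - 2 * A 1 0 * A 1 2, fun v ↦ ?_⟩
  simp only [conicForm, mulVec_fin_three]
  linear_combination v 0 ^ 2 * h0 + v 0 * v 1 * h1 + v 1 ^ 2 * h2 + v 1 * v 2 * h3 + v 2 ^ 2 * h4

lemma ne_zero_of_conicForm_mulVec_eq_mul {A : Matrix (Fin 3) (Fin 3) K} (hA : IsUnit A.det) {μ : K}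
    (h : ∀ v, conicForm (A *ᵥ v) = μ * conicForm v) : μ ≠ 0 := by
  rintro rfl
  have := h (A⁻¹ *ᵥ ![1, 0, 1])
  rw [mulVec_mulVec, mul_nonsing_inv _ hA, one_mulVec] at this
  simp [conicForm] at this

lemma row_zero_offDiag_eq_zero_of_conicForm_mulVec_eq_mul [NeZero (2 : K)]
    {A : Matrix (Fin 3) (Fin 3) K} {μ : K} (hμ : μ ≠ 0)
    (hA : ∀ v, conicForm (A *ᵥ v) = μ * conicForm v)
    (h : ∀ y : K, cubicForm (A *ᵥ ![0, y, 1]) = 0) : A 0 1 = 0 ∧ A 0 2 = 0 := by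
  have hline : ∀ y, (A 0 1 * y + A 0 2) * μ * y ^ 2 = 0 := fun y ↦ by
    have := h y
    rw [cubicForm, hA] at this
    simp only [conicForm, mulVec_fin_three, cons_val_zero, cons_val_one, cons_val_two,
      head_cons, tail_cons] at this
    linear_combination -this
  have h1 := hline 1
  have h2 := hline (-1)
  simp only [mul_one, one_pow, even_two, Even.neg_pow, mul_eq_zero, hμ, or_false] at h1 h2
  have h02 : A 0 2 = 0 :=
    (mul_eq_zero.mp (by linear_combination h1 + h2 : (2 : K) * A 0 2 = 0)).resolve_left
      two_ne_zero
  exact ⟨by linear_combination h1 - h02, h02⟩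

lemma exists_eq_stabilizerMatrix {A : Matrix (Fin 3) (Fin 3) K} (hdet : A.det = 1)
    (h01 : A 0 1 = 0) (h02 : A 0 2 = 0) {μ : K} (h : ∀ v, conicForm (A *ᵥ v) = μ * conicForm v) :
    ∃ a c b : K, a ≠ 0 ∧ c ≠ 0 ∧ c ^ 3 = 1 ∧ A = stabilizerMatrix a c b := by
  have e0 := h ![1, 0, 0]
  have e1 := h ![0, 1, 0]
  have e2 := h ![0, 0, 1]
  have e01 := h ![1, 1, 0]
  have e02 := h ![1, 0, 1]
  simp only [conicForm, mulVec_fin_three, h01, h02, cons_val_zero, cons_val_one, cons_val_two,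
    head_cons, tail_cons] at e0 e1 e2 e01 e02
  have h12 : A 1 2 = 0 := pow_eq_zero_iff two_ne_zero |>.mp (by linear_combination -e2)
  have hd : A 0 0 * A 1 1 * A 2 2 = 1 := by
    rw [det_fin_three, h01, h02, h12] at hdet
    linear_combination hdet
  have h22 : A 0 0 * A 2 2 = μ := by linear_combination e02 - e0 + (2 * A 1 0 + A 1 2) * h12
  have hac : A 0 0 * A 1 1 ≠ 0 := left_ne_zero_of_mul_eq_one hd
  have ha : A 0 0 ≠ 0 := left_ne_zero_of_mul hac
  have hc : A 1 1 ≠ 0 := right_ne_zero_of_mul hac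
  have e20 : A 2 0 = A 1 0 ^ 2 / A 0 0 := by
    field_simp
    linear_combination e0
  have e21 : A 2 1 = 2 * A 1 0 * A 1 1 / A 0 0 := by
    field_simp
    linear_combination e01 - e0 - e1
  have e22 : A 2 2 = 1 / (A 0 0 * A 1 1) := by
    field_simp
    linear_combination hd
  refine ⟨A 0 0, A 1 1, A 1 0, ha, hc, ?_, ?_⟩
  · linear_combination -A 1 1 * e1 - A 1 1 * h22 + hd
  · conv_lhs => rw [eta_fin_three A]
    rw [h01, h02, h12, e20, e21, e22, stabilizerMatrix]

lemma cubicForm_stabilizerMatrix_mulVec {a c : K} (b : K) (ha : a ≠ 0) (hc : c ≠ 0)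
    (hc3 : c ^ 3 = 1) (v : Fin 3 → K) :
    cubicForm (stabilizerMatrix a c b *ᵥ v) = a * c ^ 2 * cubicForm v := by
  simp only [stabilizerMatrix, cubicForm, conicForm, mulVec_fin_three, of_apply, cons_val',
    cons_val, cons_val_zero, cons_val_one, cons_val_fin_one, zero_mul, add_zero]
  field_simp

  linear_combination (-(v 0 ^ 2 * v 2)) * hc3

end Field

/-- An element `M ∈ SL(3,ℂ)` stabilizes the conic-plus-tangent-line cubic
`{x²·z = x·y²}` if and only if it is lower triangular with rows
`(a,0,0)`, `(b,c,0)`, `(b²/a, 2bc/a, 1/(ac))` for some `a ≠ 0`, `b`, and a cube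
root of unity `c`. -/
theorem conic_tangent_line_full_stabilizer (M : SL3) :
    act M '' Ctan = Ctan ↔
      ∃ a c b : ℂ, a ≠ 0 ∧ c ≠ 0 ∧ c ^ 3 = 1 ∧
        (M : Matrix (Fin 3) (Fin 3) ℂ) =
          !![a, 0, 0; b, c, 0; b ^ 2 / a, 2 * b * c / a, 1 / (a * c)] := by
  constructor
  · intro h
    have hC := fun v ↦ cubicForm_mulVec_eq_zero_of_image_act_subset M h.subset (v := v)
    have hrow : (M : Matrix (Fin 3) (Fin 3) ℂ) 0 ≠ 0 := fun h0 ↦ by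
      simpa [det_eq_zero_of_row_eq_zero 0 (congrFun h0)] using M.2
    obtain ⟨μ, hμ⟩ := exists_conicForm_mulVec_eq_mul _ hrow fun t ↦
      hC _ (by simp [cubicForm, conicForm])
    have hμ0 := ne_zero_of_conicForm_mulVec_eq_mul (by rw [M.2]; exact isUnit_one) hμ
    obtain ⟨h01, h02⟩ := row_zero_offDiag_eq_zero_of_conicForm_mulVec_eq_mul hμ0 hμ fun y ↦
      hC _ (by simp [cubicForm, conicForm])
    exact exists_eq_stabilizerMatrix M.2 h01 h02 hμ
  · rintro ⟨a, c, b, ha, hc, hc3, hM⟩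
    refine image_act_Ctan_eq_of_cubicForm_mulVec M (mul_ne_zero ha (pow_ne_zero 2 hc)) fun v ↦ ?_
    rw [hM]
    exact cubicForm_stabilizerMatrix_mulVec b ha hc hc3 v

end
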